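/- Achievability half of the optimistic edit-distance formula (Equation (15)): Let C be a type with decidable equality, let t and y be lists over C, and let 0 ≤ k ≤ |t|. Then the Levenshtein distance (with unit insertion, deletion and substitution costs) between y ++ t.drop k and t is at most the Levenshtein distance between y and t.take k; in particular, for every k there is a continuation of the prefix y whose edit distance to t is at most ρ_levenshtein(y, t.take k). -/

import Mathlib

namespace Levenshtein

structure Cost (α β δ : Type*) where
  delete : α → δ
  insert : β → δ
  substitute : α → β → δ

def defaultCost {α : Type*} [DecidableEq α] : Cost α α ℕ where
  delete _ := 1
  insert _ := 1
  substitute a b := if a = b then 0 else 1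

def impl {α β δ : Type*} [AddZeroClass δ] [Min δ] (C : Cost α β δ)
    (xs : List α) (y : β) (d : {r : List δ // 0 < r.length}) : {r : List δ // 0 < r.length} :=
  let ⟨ds, w⟩ := d
  xs.zip (ds.zip ds.tail) |>.foldr
    (init := ⟨[C.insert y + ds.getLast (List.length_pos_iff.mp w)], by simp⟩)
    (fun ⟨x, d₀, d₁⟩ ⟨r, w⟩ =>
      ⟨min (C.delete x + r[0]) (min (C.insert y + d₀) (C.substitute x y + d₁)) :: r, by simp⟩)

end Levenshtein

def suffixLevenshtein {α β δ : Type*} [AddZeroClass δ] [Min δ] (C : Levenshtein.Cost α β δ)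
    (xs : List α) (ys : List β) : {r : List δ // 0 < r.length} :=
  ys.foldr
    (Levenshtein.impl C xs)
    (xs.foldr (init := ⟨[0], by simp⟩) (fun a ⟨r, w⟩ => ⟨(C.delete a + r[0]) :: r, by simp⟩))

def levenshtein {α β δ : Type*} [AddZeroClass δ] [Min δ] (C : Levenshtein.Cost α β δ)
    (xs : List α) (ys : List β) : δ :=
  let ⟨r, w⟩ := suffixLevenshtein C xs ys
  r[0]

/-!
Appending the common suffix `t.drop k` to both `y` and `t.take k` cannot increase the edit
distance: any alignment of `y` with `t.take k` extends by matching the suffix with itself at zero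
cost. On the dynamic-programming recurrence this is a double induction in which every branch of
the minimum for `(xs ++ zs, ys ++ zs)` is bounded by the same branch for `(xs, ys)`, and the base
cases reduce to `levenshtein zs zs ≤ 0`.
-/

namespace Levenshtein

variable {α β δ : Type*} [AddZeroClass δ] [Min δ] (C : Cost α β δ)

theorem impl_nil_val (y : β) (S : {r : List δ // 0 < r.length}) :
    (impl C [] y S).1 = [C.insert y + S.1.getLast (List.length_pos_iff.mp S.2)] :=
  rfl

theorem impl_cons_val (x : α) (xs : List α) (y : β) (d : δ)
    (S T : {r : List δ // 0 < r.length}) (hS : S.1 = d :: T.1) :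
    (impl C (x :: xs) y S).1 =
      min (C.delete x + (impl C xs y T).1[0]'(impl C xs y T).2)
        (min (C.insert y + d) (C.substitute x y + T.1[0]'T.2)) :: (impl C xs y T).1 := by
  obtain ⟨_, _⟩ := S
  obtain ⟨T, hT⟩ := T
  subst hS
  match T, hT with
  | _ :: _, _ => rfl

end Levenshtein

open Levenshtein

section Recurrence

variable {α β δ : Type*} [AddZeroClass δ] [Min δ] (C : Cost α β δ)

theorem levenshtein_eq_getElem_zero (xs : List α) (ys : List β) :
    levenshtein C xs ys = (suffixLevenshtein C xs ys).1[0]'(suffixLevenshtein C xs ys).2 :=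
  rfl

theorem suffixLevenshtein_cons_right (xs : List α) (y : β) (ys : List β) :
    suffixLevenshtein C xs (y :: ys) = impl C xs y (suffixLevenshtein C xs ys) :=
  rfl

theorem suffixLevenshtein_cons_left_val (x : α) (xs : List α) (ys : List β) :
    (suffixLevenshtein C (x :: xs) ys).1 =
      levenshtein C (x :: xs) ys :: (suffixLevenshtein C xs ys).1 := by
  induction ys with
  | nil => rfl
  | cons y ys ih =>
    have h := impl_cons_val C x xs y _ _ _ ih
    rw [levenshtein_eq_getElem_zero]
    simp only [suffixLevenshtein_cons_right, h, List.getElem_cons_zero]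

theorem suffixLevenshtein_nil_left_val (ys : List β) :
    (suffixLevenshtein C ([] : List α) ys).1 = [levenshtein C [] ys] := by
  cases ys with
  | nil => rfl
  | cons y ys =>
    rw [levenshtein_eq_getElem_zero]
    simp only [suffixLevenshtein_cons_right, impl_nil_val, List.getElem_cons_zero]

theorem levenshtein_cons_nil (x : α) (xs : List α) :
    levenshtein C (x :: xs) ([] : List β) = C.delete x + levenshtein C xs [] :=
  rfl

theorem levenshtein_nil_cons (y : β) (ys : List β) :
    levenshtein C ([] : List α) (y :: ys) = C.insert y + levenshtein C [] ys := by
  have h := impl_nil_val C y (suffixLevenshtein C ([] : List α) ys)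
  simp only [suffixLevenshtein_nil_left_val, List.getLast_singleton] at h
  rw [levenshtein_eq_getElem_zero]
  simp only [suffixLevenshtein_cons_right, h, List.getElem_cons_zero]

theorem levenshtein_cons_cons (x : α) (xs : List α) (y : β) (ys : List β) :
    levenshtein C (x :: xs) (y :: ys) =
      min (C.delete x + levenshtein C xs (y :: ys))
        (min (C.insert y + levenshtein C (x :: xs) ys) (C.substitute x y + levenshtein C xs ys)) := by
  have h := impl_cons_val C x xs y _ _ _ (suffixLevenshtein_cons_left_val C x xs ys)
  rw [levenshtein_eq_getElem_zero]
  simp only [suffixLevenshtein_cons_right, h, List.getElem_cons_zero]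
  rfl

end Recurrence

section Ordered

variable {α β δ : Type*} [AddZeroClass δ] [LinearOrder δ]

theorem levenshtein_cons_left_le (C : Cost α β δ) (x : α) (xs : List α) (ys : List β) :
    levenshtein C (x :: xs) ys ≤ C.delete x + levenshtein C xs ys := by
  cases ys with
  | nil => rw [levenshtein_cons_nil]
  | cons y ys =>
    rw [levenshtein_cons_cons]
    exact min_le_left _ _

theorem levenshtein_cons_right_le (C : Cost α β δ) (xs : List α) (y : β) (ys : List β) :
    levenshtein C xs (y :: ys) ≤ C.insert y + levenshtein C xs ys := by
  cases xs with
  | nil => rw [levenshtein_nil_cons]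
  | cons x xs =>
    rw [levenshtein_cons_cons]
    exact (min_le_right _ _).trans (min_le_left _ _)

variable {C : Cost α α δ} (hC : ∀ a, C.substitute a a = 0)
include hC

theorem levenshtein_self_nonpos (zs : List α) : levenshtein C zs zs ≤ 0 := by
  induction zs with
  | nil => rfl
  | cons z zs ih =>
    calc levenshtein C (z :: zs) (z :: zs) ≤ C.substitute z z + levenshtein C zs zs := by
          rw [levenshtein_cons_cons]
          exact (min_le_right _ _).trans (min_le_right _ _)
      _ ≤ 0 := by rw [hC, zero_add]; exact ih

theorem levenshtein_append_right_le [AddLeftMono δ] (xs ys zs : List α) :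
    levenshtein C (xs ++ zs) (ys ++ zs) ≤ levenshtein C xs ys := by
  induction xs generalizing ys with
  | nil =>
    induction ys with
    | nil => exact levenshtein_self_nonpos hC zs
    | cons y ys ih =>
      calc levenshtein C zs (y :: ys ++ zs) ≤ C.insert y + levenshtein C zs (ys ++ zs) :=
            levenshtein_cons_right_le C zs y (ys ++ zs)
        _ ≤ levenshtein C [] (y :: ys) := by rw [levenshtein_nil_cons]; gcongr; exact ih
  | cons x xs ihx =>
    induction ys with
    | nil =>
      calc levenshtein C (x :: xs ++ zs) zs ≤ C.delete x + levenshtein C (xs ++ zs) zs :=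
            levenshtein_cons_left_le C x (xs ++ zs) zs
        _ ≤ levenshtein C (x :: xs) [] := by rw [levenshtein_cons_nil]; gcongr; exact ihx []
    | cons y ys ihy =>
      simp only [List.cons_append, levenshtein_cons_cons]
      gcongr
      · exact ihx (y :: ys)
      · exact ihy
      · exact ihx ys

end Ordered

theorem Levenshtein.defaultCost_substitute_self {α : Type*} [DecidableEq α] (a : α) :
    (defaultCost : Cost α α ℕ).substitute a a = 0 :=
  if_pos rfl

theorem optimistic_loss_achievable_general {C : Type*} [DecidableEq C]
    (t y : List C) (k : ℕ) :
    levenshtein Levenshtein.defaultCost (y ++ t.drop k) t ≤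
      levenshtein Levenshtein.defaultCost y (t.take k) := by
  simpa using levenshtein_append_right_le defaultCost_substitute_self y (t.take k) (t.drop k)

/-- Achievability half of the optimistic edit-distance formula
(Equation (15)): for every `0 ≤ k ≤ |t|`, appending the suffix `t.drop k`
of the ground truth to the prefix `y` yields a continuation whose edit
distance (unit costs) to `t` is at most `ρ_levenshtein(y, t.take k)`. -/
theorem optimistic_loss_achievable {C : Type*} [DecidableEq C]
    (t y : List C) (k : ℕ) (hk : k ≤ t.length) :
    levenshtein Levenshtein.defaultCost (y ++ t.drop k) t ≤
      levenshtein Levenshtein.defaultCost y (t.take k) :=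
  optimistic_loss_achievable_general t y k
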